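/- Suppose the law ν₀ of X₀ has a density V₀ : (0,∞) → [0,∞) with ‖V₀‖_∞ := ess sup V₀ < ∞, and suppose that for each t > 0 the law of Z_t is absolutely continuous with respect to Lebesgue measure. Let L be a solution of the McKean–Vlasov problem (MV) and set ν_t(S) := ℙ(X_t ∈ S, t < τ) for Borel sets S ⊆ ℝ. Then for every t > 0 and every Borel set S ⊆ ℝ, ν_t(S) ≤ ‖V₀‖_∞ · Leb(S), where Leb denotes Lebesgue measure; in particular ν_t has a density V_t with ‖V_t‖_∞ ≤ ‖V₀‖_∞. -/

import Mathlib

/-!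
Since `L` is deterministic, killing the particle at the origin only removes mass, so `ν_t` is
dominated by the law of `X₀ + Z_t − α f(L_t)`. By independence this law is `ν₀` convolved with
the law of `Z_t − α f(L_t)`, and convolution with a probability measure preserves the bound
`ν₀ ≤ ‖V₀‖_∞ • Leb` because Lebesgue measure is translation invariant. A measure bounded by
`c • Leb` with `c < ∞` has a Radon–Nikodym density bounded by `c`.
-/

open MeasureTheory ProbabilityTheory Filter Set Function
open scoped ENNReal

noncomputable section

variable {Ω : Type*} [MeasureSpace Ω]

/-- The event that the particle `X_s = X₀ + Z_s − α f(L_s)` has reached `(-∞, 0]` by time `t`. -/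
def hitBy (X0 : Ω → ℝ) (Z : ℝ → Ω → ℝ) (f : ℝ → ℝ) (α : ℝ) (L : ℝ → ℝ) (t : ℝ) : Set Ω :=
  {ω | ∃ s ∈ Set.Icc (0 : ℝ) t, X0 ω + Z s ω - α * f (L s) ≤ 0}

/-- A solution of the McKean--Vlasov problem (MV). -/
def IsMVSolution (X0 : Ω → ℝ) (Z : ℝ → Ω → ℝ) (f : ℝ → ℝ) (α : ℝ) (L : ℝ → ℝ) : Prop :=
  MonotoneOn L (Set.Ici 0) ∧ L 0 = 0 ∧ (∀ t, 0 ≤ t → L t ∈ Set.Icc (0 : ℝ) 1) ∧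
  (∀ t, 0 ≤ t → ContinuousWithinAt L (Set.Ici t) t) ∧
  (∀ t, 0 ≤ t → L t = ((ℙ : Measure Ω) (hitBy X0 Z f α L t)).toReal)

/-- The sub-probability law `ν_t(S) = ℙ(X_t ∈ S, t < τ)` of the particle killed at the origin:
the law of `X_t` on the event that `X_s > 0` for all `s ∈ [0, t]`. -/
def subLaw (X0 : Ω → ℝ) (Z : ℝ → Ω → ℝ) (f : ℝ → ℝ) (α : ℝ) (L : ℝ → ℝ) (t : ℝ) : Measure ℝ :=
  Measure.map (fun ω => X0 ω + Z t ω - α * f (L t))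
    ((ℙ : Measure Ω).restrict {ω | ∀ s ∈ Set.Icc (0 : ℝ) t, 0 < X0 ω + Z s ω - α * f (L s)})

namespace MeasureTheory

theorem withDensity_ofReal_le_eLpNorm_top_smul {α : Type*} [MeasurableSpace α] (μ : Measure α)
    (V : α → ℝ) : μ.withDensity (fun x => ENNReal.ofReal (V x)) ≤ eLpNorm V ⊤ μ • μ := by
  rw [← withDensity_const]
  refine withDensity_mono ?_
  filter_upwards [ae_le_eLpNormEssSup (f := V) (μ := μ)] with x hx
  rw [eLpNorm_exponent_top]
  exact (Real.ofReal_le_enorm (V x)).trans hx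

theorem Measure.conv_le_smul_of_le_smul {G : Type*} [AddGroup G] [MeasurableSpace G]
    [MeasurableAdd₂ G] {μ ν ρ : Measure G} [SFinite μ] [SFinite ν] [ρ.IsAddRightInvariant]
    {c : ℝ≥0∞} (hμ : μ ≤ c • ρ) : μ ∗ ν ≤ (c * ν univ) • ρ := by
  refine Measure.le_intro fun s hs _ => ?_
  rw [Measure.conv, Measure.map_apply measurable_add hs,
    Measure.prod_apply_symm (measurable_add hs)]
  calc ∫⁻ y, μ ((fun x => (x, y)) ⁻¹' ((fun p : G × G => p.1 + p.2) ⁻¹' s)) ∂ν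
      ≤ ∫⁻ _, c * ρ s ∂ν := lintegral_mono fun y =>
        (hμ ((fun x => x + y) ⁻¹' s)).trans_eq (by rw [Measure.smul_apply, smul_eq_mul,
          measure_preimage_add_right])
    _ = (c * ν univ) • ρ s := by
        rw [lintegral_const, smul_eq_mul]; ring

theorem Measure.exists_bounded_density_of_le_smul {α : Type*} [MeasurableSpace α]
    {μ ν : Measure α} [SigmaFinite μ] {c : ℝ≥0∞} (hc : c ≠ ∞) (hν : ν ≤ c • μ) :
    ∃ V : α → ℝ, Measurable V ∧ (∀ x, 0 ≤ V x) ∧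
      ν = μ.withDensity (fun x => ENNReal.ofReal (V x)) ∧ eLpNorm V ⊤ μ ≤ c := by
  have : SigmaFinite ν := by
    lift c to NNReal using hc
    exact sigmaFinite_of_le (c • μ) hν
  have hbound : ν.rnDeriv μ ≤ᵐ[μ] fun _ => c :=
    ae_le_of_forall_setLIntegral_le_of_sigmaFinite (ν.measurable_rnDeriv μ) fun s _ _ =>
      (Measure.setLIntegral_rnDeriv_le s).trans <| by
        simpa [setLIntegral_const, mul_comm] using hν s
  refine ⟨fun x => (ν.rnDeriv μ x).toReal, (ν.measurable_rnDeriv μ).ennreal_toReal,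
    fun _ => ENNReal.toReal_nonneg, ?_, ?_⟩
  · have hofReal : (fun x => ENNReal.ofReal (ν.rnDeriv μ x).toReal) =ᵐ[μ] ν.rnDeriv μ := by
      filter_upwards [ν.rnDeriv_lt_top μ] with x hx using ENNReal.ofReal_toReal hx.ne
    rw [withDensity_congr_ae hofReal,
      Measure.withDensity_rnDeriv_eq ν μ (Measure.absolutelyContinuous_of_le_smul hν)]
  · rw [eLpNorm_exponent_top]
    refine essSup_le_of_ae_le c ?_
    filter_upwards [hbound] with x hx
    exact (Real.enorm_eq_ofReal ENNReal.toReal_nonneg).trans_le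
      (ENNReal.ofReal_toReal_le.trans hx)

end MeasureTheory

theorem subLaw_le_map {X0 : Ω → ℝ} {Z : ℝ → Ω → ℝ} (hX0 : Measurable X0) (f : ℝ → ℝ) (α : ℝ)
    (L : ℝ → ℝ) {t : ℝ} (hZ : Measurable (Z t)) :
    subLaw X0 Z f α L t ≤ (ℙ : Measure Ω).map (fun ω => X0 ω + Z t ω - α * f (L t)) :=
  Measure.map_mono Measure.restrict_le_self (by fun_prop)

theorem mv_subLaw_density_bound
    (hprob : IsProbabilityMeasure (ℙ : Measure Ω))
    (X0 : Ω → ℝ) (hX0meas : Measurable X0)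
    (Z : ℝ → Ω → ℝ) (hZmeas : ∀ t, Measurable (Z t))
    (hindep : IndepFun X0 (fun ω => fun t => Z t ω) ℙ)
    (f : ℝ → ℝ) (α : ℝ)
    (V₀ : ℝ → ℝ)
    (hdens : Measure.map X0 (ℙ : Measure Ω)
      = volume.withDensity fun x => ENNReal.ofReal (V₀ x))
    (hV₀bdd : MemLp V₀ ⊤ volume)
    (L : ℝ → ℝ)
    (t : ℝ) :
    (∀ S : Set ℝ, MeasurableSet S →
        subLaw X0 Z f α L t S ≤ eLpNorm V₀ ⊤ volume * volume S) ∧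
    ∃ Vt : ℝ → ℝ, Measurable Vt ∧ (∀ x, 0 ≤ Vt x) ∧
      subLaw X0 Z f α L t = volume.withDensity (fun x => ENNReal.ofReal (Vt x)) ∧
      eLpNorm Vt ⊤ volume ≤ eLpNorm V₀ ⊤ volume := by
  set W : Ω → ℝ := fun ω => Z t ω - α * f (L t)
  have hW : Measurable W := (hZmeas t).sub_const _
  have hXW : IndepFun X0 W ℙ := hindep.comp measurable_id ((measurable_pi_apply t).sub_const _)
  have hlaw : (ℙ : Measure Ω).map (fun ω => X0 ω + Z t ω - α * f (L t))
      ≤ eLpNorm V₀ ⊤ volume • volume := by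
    have hsum : (fun ω => X0 ω + Z t ω - α * f (L t)) = X0 + W := by
      funext ω; exact add_sub_assoc _ _ _
    rw [hsum, hXW.map_add_eq_map_conv_map hX0meas hW]
    have : IsProbabilityMeasure ((ℙ : Measure Ω).map W) :=
      Measure.isProbabilityMeasure_map hW.aemeasurable
    simpa only [measure_univ, mul_one] using
      Measure.conv_le_smul_of_le_smul (ν := (ℙ : Measure Ω).map W)
        (hdens ▸ withDensity_ofReal_le_eLpNorm_top_smul volume V₀)
  have hν := (subLaw_le_map hX0meas f α L (hZmeas t)).trans hlaw
  exact ⟨fun S _ => hν S, Measure.exists_bounded_density_of_le_smul hV₀bdd.2.ne hν⟩
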